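/- arXiv:2401.10486 — 5 statements merged into one kernel-verified Lean document; each statement's English description precedes it below -/
import Mathlib

section
/- Let P and Q be Bernoulli distributions with parameters p and q respectively, where 0 < q < 1. Then the Kullback–Leibler divergence satisfies D_KL(P‖Q) ≤ (p - q)²/(q(1 - q)). -/
/-- The Kullback–Leibler divergence between Bernoulli(p) and Bernoulli(q),
`D_KL(P‖Q) = p·log(p/q) + (1-p)·log((1-p)/(1-q))`, is at most `(p-q)²/(q(1-q))`. -/
theorem bernoulli_KL_le (p q : ℝ) (hp0 : 0 ≤ p) (hp1 : p ≤ 1)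
    (hq0 : 0 < q) (hq1 : q < 1) :
    p * Real.log (p / q) + (1 - p) * Real.log ((1 - p) / (1 - q)) ≤
      (p - q)^2 / (q * (1 - q)) := by
  have hq1' : 0 < 1 - q := by linarith
  have h1 : p * Real.log (p / q) ≤ p * (p / q - 1) := by
    rcases eq_or_lt_of_le hp0 with h | h
    · simp [← h]
    · exact mul_le_mul_of_nonneg_left
        (Real.log_le_sub_one_of_pos (div_pos h hq0)) hp0
  have h2 : (1 - p) * Real.log ((1 - p) / (1 - q)) ≤ (1 - p) * ((1 - p) / (1 - q) - 1) := by
    rcases eq_or_lt_of_le hp1 with h | h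
    · simp [h]
    · exact mul_le_mul_of_nonneg_left
        (Real.log_le_sub_one_of_pos (div_pos (by linarith) hq1')) (by linarith)
  have key : p * (p / q - 1) + (1 - p) * ((1 - p) / (1 - q) - 1)
      = (p - q)^2 / (q * (1 - q)) := by
    field_simp
    ring
  linarith
end

section
/- For any edge-probabilities p = p(n) and q = q(n) with p, q ∈ (0,1), there exists a coupling of the binomial random graphs G(n,p) and G(n,q) such that P(G(n,p) = G(n,q)) ≥ 1 - n·|p - q|/√(4q(1-q)). -/
open MeasureTheory

/-- The distribution of i.i.d. Bernoulli(p) indicators indexed by `α`: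
the model of a binomial random graph when `α` is the set of potential edges. -/
noncomputable def productBernoulli (α : Type) [Fintype α] [DecidableEq α] (p : ℝ) :
    Measure (α → Bool) :=
  ∑ f : α → Bool,
    (∏ a : α, if f a then ENNReal.ofReal p else ENNReal.ofReal (1 - p)) • Measure.dirac f

/-- The potential edges of a graph on vertex set `Fin n`. -/
abbrev EdgeSet (n : ℕ) := {e : Sym2 (Fin n) // ¬ e.IsDiag}

/-- `u` and `v` are adjacent in the graph encoded by `f`. -/
def Adj {n : ℕ} (f : EdgeSet n → Bool) (u v : Fin n) : Prop :=
  ∃ h : ¬ (s(u, v) : Sym2 (Fin n)).IsDiag, f ⟨s(u, v), h⟩ = true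

/-- `A` is a dominating set of the graph encoded by `f`. -/
def Dominates {n : ℕ} (f : EdgeSet n → Bool) (A : Finset (Fin n)) : Prop :=
  ∀ v : Fin n, v ∉ A → ∃ a ∈ A, Adj f v a

/-!
The maximal coupling of two distributions `P`, `Q` on a finite set puts mass
`∑ min (P, Q) = 1 - ‖P - Q‖₁ / 2` on the diagonal. For the product Bernoulli distributions on the
`N = n (n - 1) / 2` potential edges, Pinsker's inequality, additivity of the Kullback–Leibler
divergence over independent coordinates and the bound of the Bernoulli divergence by the
χ²-divergence give `‖P - Q‖₁² ≤ 2 N (p - q)² / (q (1 - q)) ≤ n² (p - q)² / (q (1 - q))`.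
-/

section KLDivergence

open Real Finset

lemma mul_log_div_eq_mul_log_sub {x y : ℝ} (hy : y ≠ 0) :
    x * log (x / y) = x * log x - x * log y := by
  rcases eq_or_ne x 0 with rfl | hx
  · simp
  · rw [log_div hx hy, mul_sub]

noncomputable def binaryKL (a b : ℝ) : ℝ :=
  a * log (a / b) + (1 - a) * log ((1 - a) / (1 - b))

lemma binaryKL_self (a : ℝ) : binaryKL a a = 0 := by
  simp [binaryKL]

lemma hasDerivAt_binaryKL_right {a t : ℝ} (ht₀ : 0 < t) (ht₁ : t < 1) :
    HasDerivAt (binaryKL a) ((1 - a) / (1 - t) - a / t) t := by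
  have h_eq : (fun s => a * log a - a * log s + ((1 - a) * log (1 - a) - (1 - a) * log (1 - s)))
      =ᶠ[nhds t] binaryKL a := by
    filter_upwards [Ioo_mem_nhds ht₀ ht₁] with s hs
    rw [binaryKL, mul_log_div_eq_mul_log_sub hs.1.ne',
      mul_log_div_eq_mul_log_sub (by linarith [hs.2])]
  have h_log₁ : HasDerivAt (fun s => log (1 - s)) (-1 / (1 - t)) t := by
    simpa using ((hasDerivAt_id' t).const_sub 1).log (by linarith)
  have h := (((hasDerivAt_log ht₀.ne').const_mul a).const_sub (a * log a)).add
    ((h_log₁.const_mul (1 - a)).const_sub ((1 - a) * log (1 - a)))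
  refine (h.congr_of_eventuallyEq h_eq.symm).congr_deriv ?_
  field_simp
  ring

lemma continuousOn_binaryKL_right {a b : ℝ} (hb : 0 < b) (ha : a ≤ 1) :
    ContinuousOn (binaryKL a) (Set.Icc b a) := by
  rcases ha.lt_or_eq with ha | rfl
  · exact fun t ht => (hasDerivAt_binaryKL_right (hb.trans_le ht.1) (ht.2.trans_lt ha))
      |>.continuousAt.continuousWithinAt
  · have h_eq : binaryKL 1 = fun t => -log t := by ext t; simp [binaryKL]
    rw [h_eq]
    exact (continuousOn_log.mono fun t ht => (hb.trans_le ht.1).ne').neg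

theorem two_mul_sq_sub_le_binaryKL {a b : ℝ} (hb : 0 < b) (hba : b ≤ a) (ha : a ≤ 1) :
    2 * (a - b) ^ 2 ≤ binaryKL a b := by
  -- `∂ₜ (binaryKL a t - 2 (a - t)²) = (a - t) (4 - 1 / (t (1 - t)))` and `t (1 - t) ≤ 1/4`
  have h_anti : AntitoneOn (fun t => binaryKL a t - 2 * (a - t) ^ 2) (Set.Icc b a) := by
    refine antitoneOn_of_hasDerivWithinAt_nonpos (convex_Icc b a)
      ((continuousOn_binaryKL_right hb ha).sub (by fun_prop))
      (f' := fun t => (1 - a) / (1 - t) - a / t + 4 * (a - t)) ?_ ?_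
    · intro t ht
      rw [interior_Icc] at ht
      have h_sq : HasDerivAt (fun s => 2 * (a - s) ^ 2) (-(4 * (a - t))) t :=
        ((((hasDerivAt_id' t).const_sub a).fun_pow 2).const_mul 2).congr_deriv
          (by norm_num; ring)
      have h := (hasDerivAt_binaryKL_right (a := a) (hb.trans ht.1) (ht.2.trans_le ha)).sub h_sq
      rw [sub_neg_eq_add] at h
      exact h.hasDerivWithinAt
    · intro t ht
      rw [interior_Icc] at ht
      have ht₀ : 0 < t := hb.trans ht.1
      have ht₁ : 0 < 1 - t := by linarith [ht.2]
      have h_eq : (1 - a) / (1 - t) - a / t + 4 * (a - t)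
          = (a - t) * (4 - 1 / (t * (1 - t))) := by field_simp; ring
      rw [h_eq]
      refine mul_nonpos_of_nonneg_of_nonpos (by linarith [ht.2]) ?_
      rw [sub_nonpos, le_div_iff₀ (by positivity)]
      nlinarith [sq_nonneg (2 * t - 1)]
  have := h_anti ⟨le_rfl, hba⟩ ⟨hba, le_rfl⟩ hba
  simp only [binaryKL_self, sub_self] at this
  linarith

-- `log u ≥ 1 - 1 / u` at `u = x / (c y)`
lemma mul_log_add_sub_le_mul_log_div {x y c : ℝ} (hx : 0 < x) (hy : 0 < y) (hc : 0 < c) :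
    x * log c + x - c * y ≤ x * log (x / y) := by
  have h := one_sub_inv_le_log_of_pos (show 0 < x / (y * c) by positivity)
  rw [log_div hx.ne' (by positivity), log_mul hy.ne' hc.ne', inv_div] at h
  have h' := mul_le_mul_of_nonneg_left h hx.le
  rw [log_div hx.ne' hy.ne']
  field_simp at h'
  nlinarith [h']

/-- The log-sum inequality. -/
theorem sum_mul_log_div_sum_le {ι : Type*} (s : Finset ι) {P Q : ι → ℝ}
    (hP : ∀ i ∈ s, 0 < P i) (hQ : ∀ i ∈ s, 0 < Q i) :
    (∑ i ∈ s, P i) * log ((∑ i ∈ s, P i) / ∑ i ∈ s, Q i) ≤ ∑ i ∈ s, P i * log (P i / Q i) := by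
  rcases s.eq_empty_or_nonempty with rfl | hs
  · simp
  have hA := sum_pos hP hs
  have hB := sum_pos hQ hs
  calc (∑ i ∈ s, P i) * log ((∑ i ∈ s, P i) / ∑ i ∈ s, Q i)
      = ∑ i ∈ s, (P i * log ((∑ i ∈ s, P i) / ∑ i ∈ s, Q i) + P i
          - (∑ i ∈ s, P i) / (∑ i ∈ s, Q i) * Q i) := by
        rw [sum_sub_distrib, sum_add_distrib, ← sum_mul, ← mul_sum, div_mul_cancel₀ _ hB.ne']
        ring
    _ ≤ ∑ i ∈ s, P i * log (P i / Q i) :=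
        sum_le_sum fun i hi => mul_log_add_sub_le_mul_log_div (hP i hi) (hQ i hi) (by positivity)

lemma sum_abs_eq_two_mul_sum_filter_nonneg {ι : Type*} [Fintype ι] {d : ι → ℝ}
    (hd : ∑ i, d i = 0) : ∑ i, |d i| = 2 * ∑ i with 0 ≤ d i, d i := by
  rw [← sum_filter_add_sum_filter_not univ (fun i => 0 ≤ d i)] at hd ⊢
  have h_neg : ∑ i with ¬0 ≤ d i, |d i| = -∑ i with ¬0 ≤ d i, d i := by
    rw [← sum_neg_distrib]
    exact sum_congr rfl fun i hi => abs_of_neg (not_le.1 (mem_filter.1 hi).2)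
  rw [h_neg, sum_congr rfl fun i hi => abs_of_nonneg (mem_filter.1 hi).2]
  linarith

/-- Pinsker's inequality. -/
theorem sq_sum_abs_sub_le_two_mul_sum_mul_log_div {ι : Type*} [Fintype ι] {P Q : ι → ℝ}
    (hP : ∀ i, 0 < P i) (hQ : ∀ i, 0 < Q i) (hP₁ : ∑ i, P i = 1) (hQ₁ : ∑ i, Q i = 1) :
    (∑ i, |P i - Q i|) ^ 2 ≤ 2 * ∑ i, P i * log (P i / Q i) := by
  classical
  -- reduce to two points: the event where `P ≥ Q` and its complement
  set A := univ.filter fun i => 0 ≤ P i - Q i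
  have hA : A.Nonempty := by
    have : (univ : Finset ι).Nonempty := nonempty_of_sum_ne_zero (hP₁.symm ▸ one_ne_zero)
    obtain ⟨i, -, hi⟩ := exists_le_of_sum_le this (hQ₁.trans hP₁.symm).le
    exact ⟨i, mem_filter.2 ⟨mem_univ i, sub_nonneg.2 hi⟩⟩
  have hA_compl (R : ι → ℝ) (hR : ∑ i, R i = 1) :
      ∑ i ∈ univ.filter (fun i => ¬0 ≤ P i - Q i), R i = 1 - ∑ i ∈ A, R i := by
    rw [← hR, ← sum_filter_add_sum_filter_not univ (fun i => 0 ≤ P i - Q i)]; ring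
  have h_tv : ∑ i, |P i - Q i| = 2 * (∑ i ∈ A, P i - ∑ i ∈ A, Q i) := by
    rw [sum_abs_eq_two_mul_sum_filter_nonneg (by rw [sum_sub_distrib, hP₁, hQ₁, sub_self]),
      sum_sub_distrib]
  have h_kl : binaryKL (∑ i ∈ A, P i) (∑ i ∈ A, Q i) ≤ ∑ i, P i * log (P i / Q i) := by
    rw [binaryKL, ← hA_compl P hP₁, ← hA_compl Q hQ₁,
      ← sum_filter_add_sum_filter_not univ (fun i => 0 ≤ P i - Q i)]
    exact add_le_add (sum_mul_log_div_sum_le _ (fun i _ => hP i) (fun i _ => hQ i))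
      (sum_mul_log_div_sum_le _ (fun i _ => hP i) (fun i _ => hQ i))
  have h_two := two_mul_sq_sub_le_binaryKL (sum_pos (fun i _ => hQ i) hA)
    (sum_le_sum fun i hi => sub_nonneg.1 (mem_filter.1 hi).2)
    (hP₁ ▸ sum_le_sum_of_subset_of_nonneg (subset_univ A) fun i _ _ => (hP i).le)
  rw [h_tv]
  linarith

lemma binaryKL_le_sq_sub_div {p q : ℝ} (hp : p ∈ Set.Ioo (0 : ℝ) 1)
    (hq : q ∈ Set.Ioo (0 : ℝ) 1) :
    binaryKL p q ≤ (p - q) ^ 2 / (q * (1 - q)) := by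
  obtain ⟨hp₀, hp₁⟩ := hp
  obtain ⟨hq₀, hq₁⟩ := hq
  have h₁ := mul_le_mul_of_nonneg_left (log_le_sub_one_of_pos (div_pos hp₀ hq₀)) hp₀.le
  have h₂ := mul_le_mul_of_nonneg_left
    (log_le_sub_one_of_pos (div_pos (sub_pos.2 hp₁) (sub_pos.2 hq₁))) (sub_pos.2 hp₁).le
  calc binaryKL p q ≤ p * (p / q - 1) + (1 - p) * ((1 - p) / (1 - q) - 1) := add_le_add h₁ h₂
    _ = (p - q) ^ 2 / (q * (1 - q)) := by field_simp [(sub_pos.2 hq₁).ne']; ring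

end KLDivergence

section ProductBernoulli

open Real Finset

variable {α : Type*} [Fintype α]

def bernoulliMass (p : ℝ) (t : Bool) : ℝ := if t then p else 1 - p

def productBernoulliMass (p : ℝ) (f : α → Bool) : ℝ := ∏ a, bernoulliMass p (f a)

lemma bernoulliMass_pos {p : ℝ} (hp : p ∈ Set.Ioo (0 : ℝ) 1) (t : Bool) :
    0 < bernoulliMass p t := by
  cases t
  · exact sub_pos.2 hp.2
  · exact hp.1

lemma productBernoulliMass_pos {p : ℝ} (hp : p ∈ Set.Ioo (0 : ℝ) 1) (f : α → Bool) :
    0 < productBernoulliMass p f :=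
  prod_pos fun a _ => bernoulliMass_pos hp (f a)

lemma sum_bernoulliMass (p : ℝ) : ∑ t, bernoulliMass p t = 1 := by
  simp [bernoulliMass]

lemma binaryKL_eq_sum_bernoulliMass (p q : ℝ) :
    binaryKL p q = ∑ t, bernoulliMass p t * log (bernoulliMass p t / bernoulliMass q t) := by
  simp [binaryKL, bernoulliMass]

variable [DecidableEq α]

lemma sum_productBernoulliMass (p : ℝ) : ∑ f : α → Bool, productBernoulliMass p f = 1 := by
  simp only [productBernoulliMass, ← Fintype.prod_sum, sum_bernoulliMass, prod_const_one]

lemma sum_productBernoulliMass_mul_apply (p : ℝ) (a₀ : α) (L : Bool → ℝ) :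
    ∑ f : α → Bool, productBernoulliMass p f * L (f a₀) = ∑ t, bernoulliMass p t * L t := by
  have h (f : α → Bool) : productBernoulliMass p f * L (f a₀)
      = ∏ a, bernoulliMass p (f a) * if a = a₀ then L (f a) else 1 := by
    rw [prod_mul_distrib, prod_ite_eq' univ a₀, if_pos (mem_univ a₀), productBernoulliMass]
  simp_rw [h]
  rw [← Fintype.prod_sum fun a t => bernoulliMass p t * if a = a₀ then L t else 1,
    prod_eq_single a₀ (fun a _ ha => by simp [ha, bernoulliMass]) (by simp)]
  simp

lemma sum_productBernoulliMass_mul_log_div {p q : ℝ} (hp : p ∈ Set.Ioo (0 : ℝ) 1)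
    (hq : q ∈ Set.Ioo (0 : ℝ) 1) :
    ∑ f : α → Bool,
        productBernoulliMass p f * log (productBernoulliMass p f / productBernoulliMass q f)
      = Fintype.card α * binaryKL p q := by
  have h_log (f : α → Bool) : log (productBernoulliMass p f / productBernoulliMass q f)
      = ∑ a, log (bernoulliMass p (f a) / bernoulliMass q (f a)) := by
    rw [productBernoulliMass, productBernoulliMass, ← prod_div_distrib]
    exact log_prod fun a _ => (div_pos (bernoulliMass_pos hp _) (bernoulliMass_pos hq _)).ne'
  simp_rw [h_log, mul_sum]
  rw [sum_comm]
  simp_rw [sum_productBernoulliMass_mul_apply p _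
      fun t => log (bernoulliMass p t / bernoulliMass q t),
    ← binaryKL_eq_sum_bernoulliMass, sum_const, card_univ, nsmul_eq_mul]

theorem sq_sum_abs_sub_productBernoulliMass_le {p q : ℝ} (hp : p ∈ Set.Ioo (0 : ℝ) 1)
    (hq : q ∈ Set.Ioo (0 : ℝ) 1) :
    (∑ f : α → Bool, |productBernoulliMass p f - productBernoulliMass q f|) ^ 2
      ≤ 2 * Fintype.card α * ((p - q) ^ 2 / (q * (1 - q))) := by
  calc (∑ f : α → Bool, |productBernoulliMass p f - productBernoulliMass q f|) ^ 2
      ≤ 2 * ∑ f : α → Bool,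
          productBernoulliMass p f * log (productBernoulliMass p f / productBernoulliMass q f) :=
        sq_sum_abs_sub_le_two_mul_sum_mul_log_div (productBernoulliMass_pos hp)
          (productBernoulliMass_pos hq) (sum_productBernoulliMass p) (sum_productBernoulliMass q)
    _ = 2 * Fintype.card α * binaryKL p q := by
        rw [sum_productBernoulliMass_mul_log_div hp hq, mul_assoc]
    _ ≤ 2 * Fintype.card α * ((p - q) ^ 2 / (q * (1 - q))) := by
        gcongr
        exact binaryKL_le_sq_sub_div hp hq

end ProductBernoulli

section PointMassMeasure

open Finset

variable {β γ : Type*} [Fintype β] [MeasurableSpace β]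

noncomputable def pointMassMeasure (w : β → ℝ) : Measure β :=
  ∑ b, ENNReal.ofReal (w b) • Measure.dirac b

lemma pointMassMeasure_apply [MeasurableSingletonClass β] (w : β → ℝ) (s : Set β)
    [DecidablePred (· ∈ s)] : pointMassMeasure w s = ∑ b with b ∈ s, ENNReal.ofReal (w b) := by
  simp [pointMassMeasure, Measure.dirac_apply, Set.indicator_apply, sum_ite]

lemma isProbabilityMeasure_pointMassMeasure [MeasurableSingletonClass β] {w : β → ℝ}
    (hw₀ : ∀ b, 0 ≤ w b) (hw₁ : ∑ b, w b = 1) : IsProbabilityMeasure (pointMassMeasure w) := by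
  classical
  constructor
  rw [pointMassMeasure_apply, filter_true_of_mem fun b _ => Set.mem_univ b,
    ← ENNReal.ofReal_sum_of_nonneg fun b _ => hw₀ b, hw₁, ENNReal.ofReal_one]

lemma map_pointMassMeasure [MeasurableSpace γ] (w : β → ℝ) {g : β → γ} (hg : Measurable g) :
    (pointMassMeasure w).map g = ∑ b, ENNReal.ofReal (w b) • Measure.dirac (g b) := by
  simp_rw [pointMassMeasure, ← Measure.mapₗ_apply_of_measurable hg, map_sum, map_smul,
    Measure.mapₗ_apply_of_measurable hg, Measure.map_dirac' hg]

variable [Fintype γ] [MeasurableSpace γ]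

lemma map_fst_pointMassMeasure {w : β × γ → ℝ} (hw : ∀ z, 0 ≤ w z) :
    (pointMassMeasure w).map Prod.fst = pointMassMeasure fun x => ∑ y, w (x, y) := by
  rw [map_pointMassMeasure w measurable_fst, Fintype.sum_prod_type, pointMassMeasure]
  refine sum_congr rfl fun x _ => ?_
  rw [ENNReal.ofReal_sum_of_nonneg fun y _ => hw (x, y), sum_smul]

lemma map_snd_pointMassMeasure {w : β × γ → ℝ} (hw : ∀ z, 0 ≤ w z) :
    (pointMassMeasure w).map Prod.snd = pointMassMeasure fun y => ∑ x, w (x, y) := by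
  rw [map_pointMassMeasure w measurable_snd, Fintype.sum_prod_type_right, pointMassMeasure]
  refine sum_congr rfl fun y _ => ?_
  rw [ENNReal.ofReal_sum_of_nonneg fun x _ => hw (x, y), sum_smul]

end PointMassMeasure

section MaximalCoupling

open Finset

variable {β : Type*} [Fintype β] [DecidableEq β]

/-- The maximal coupling of `P` and `Q`. The excesses `P - min P Q` and `Q - min P Q` have disjoint
supports, so the diagonal carries exactly `min P Q`; the remaining mass `1 - ∑ min P Q` is spread
as the product of the normalized excesses. -/
noncomputable def maximalCouplingMass (P Q : β → ℝ) (z : β × β) : ℝ :=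
  (if z.1 = z.2 then min (P z.1) (Q z.1) else 0)
    + (P z.1 - min (P z.1) (Q z.1)) * (Q z.2 - min (P z.2) (Q z.2)) / (1 - ∑ b, min (P b) (Q b))

lemma maximalCouplingMass_swap (P Q : β → ℝ) (z : β × β) :
    maximalCouplingMass Q P z.swap = maximalCouplingMass P Q z := by
  obtain ⟨x, y⟩ := z
  simp only [maximalCouplingMass, Prod.fst_swap, Prod.snd_swap, min_comm (Q _), eq_comm (a := y)]
  split_ifs with h
  · subst h; ring
  · ring

lemma maximalCouplingMass_nonneg {P Q : β → ℝ} (hP₀ : ∀ b, 0 ≤ P b) (hQ₀ : ∀ b, 0 ≤ Q b)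
    (hP₁ : ∑ b, P b = 1) (z : β × β) : 0 ≤ maximalCouplingMass P Q z := by
  have h_sum : ∑ b, min (P b) (Q b) ≤ 1 := hP₁ ▸ sum_le_sum fun b _ => min_le_left _ _
  refine add_nonneg (by split_ifs <;> simp [hP₀, hQ₀]) (div_nonneg (mul_nonneg ?_ ?_) ?_)
  all_goals linarith [min_le_left (P z.1) (Q z.1), min_le_right (P z.2) (Q z.2)]

lemma maximalCouplingMass_diag (P Q : β → ℝ) (x : β) :
    maximalCouplingMass P Q (x, x) = min (P x) (Q x) := by
  rcases le_total (P x) (Q x) with h | h <;> simp [maximalCouplingMass, h]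

lemma sum_maximalCouplingMass_right {P Q : β → ℝ} (hP₁ : ∑ b, P b = 1) (hQ₁ : ∑ b, Q b = 1)
    (x : β) : ∑ y, maximalCouplingMass P Q (x, y) = P x := by
  simp only [maximalCouplingMass, sum_add_distrib, sum_ite_eq, mem_univ, if_true]
  rw [← sum_div, ← mul_sum]
  set r := 1 - ∑ b, min (P b) (Q b)
  have h_excess (R : β → ℝ) (hR : ∑ b, R b = 1) : ∑ b, (R b - min (P b) (Q b)) = r := by
    rw [sum_sub_distrib, hR]
  rw [h_excess Q hQ₁]
  -- division by `r = 0` gives `0`, but then `P = min P Q`, so the excess of `P` at `x` vanishes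
  rcases eq_or_ne r 0 with hr | hr
  · rw [← h_excess P hP₁, sum_eq_zero_iff_of_nonneg fun b _ => sub_nonneg.2 (min_le_left _ _)]
      at hr
    rw [hr x (mem_univ x), zero_mul, zero_div]
    linarith [hr x (mem_univ x)]
  · rw [mul_div_cancel_right₀ _ hr]
    ring

lemma sum_maximalCouplingMass_left {P Q : β → ℝ} (hP₁ : ∑ b, P b = 1) (hQ₁ : ∑ b, Q b = 1)
    (y : β) : ∑ x, maximalCouplingMass P Q (x, y) = Q y := by
  simp_rw [← maximalCouplingMass_swap P Q, Prod.swap_prod_mk]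
  exact sum_maximalCouplingMass_right hQ₁ hP₁ y

variable [MeasurableSpace β] [MeasurableSingletonClass β]

theorem exists_coupling_measure_diagonal_eq_sum_min {P Q : β → ℝ} (hP₀ : ∀ b, 0 ≤ P b)
    (hQ₀ : ∀ b, 0 ≤ Q b) (hP₁ : ∑ b, P b = 1) (hQ₁ : ∑ b, Q b = 1) :
    ∃ μ : Measure (β × β), IsProbabilityMeasure μ ∧ μ.map Prod.fst = pointMassMeasure P ∧
      μ.map Prod.snd = pointMassMeasure Q ∧
      (μ {z | z.1 = z.2}).toReal = ∑ b, min (P b) (Q b) := by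
  have hw₀ := maximalCouplingMass_nonneg hP₀ hQ₀ hP₁
  refine ⟨pointMassMeasure (maximalCouplingMass P Q), ?_, ?_, ?_, ?_⟩
  · refine isProbabilityMeasure_pointMassMeasure hw₀ ?_
    rw [Fintype.sum_prod_type]
    simp_rw [sum_maximalCouplingMass_right hP₁ hQ₁, hP₁]
  · simp_rw [map_fst_pointMassMeasure hw₀, sum_maximalCouplingMass_right hP₁ hQ₁]
  · simp_rw [map_snd_pointMassMeasure hw₀, sum_maximalCouplingMass_left hP₁ hQ₁]
  · classical
    rw [pointMassMeasure_apply, sum_filter, Fintype.sum_prod_type]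
    simp only [Set.mem_ofPred_eq, sum_ite_eq, mem_univ, if_true, maximalCouplingMass_diag]
    rw [← ENNReal.ofReal_sum_of_nonneg fun b _ => le_min (hP₀ b) (hQ₀ b),
      ENNReal.toReal_ofReal (sum_nonneg fun b _ => le_min (hP₀ b) (hQ₀ b))]

lemma sum_min_eq_one_sub_half_sum_abs {ι : Type*} [Fintype ι] {P Q : ι → ℝ}
    (hP₁ : ∑ i, P i = 1) (hQ₁ : ∑ i, Q i = 1) :
    ∑ i, min (P i) (Q i) = 1 - (∑ i, |P i - Q i|) / 2 := by
  have h (i : ι) : min (P i) (Q i) = (P i + Q i - |P i - Q i|) / 2 := by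
    linarith [max_sub_min_eq_abs' (P i) (Q i), min_add_max (P i) (Q i)]
  simp_rw [h, ← sum_div, sum_sub_distrib, sum_add_distrib, hP₁, hQ₁]
  ring

end MaximalCoupling

lemma productBernoulli_eq_pointMassMeasure (α : Type) [Fintype α] [DecidableEq α] {p : ℝ}
    (hp₀ : 0 ≤ p) (hp₁ : p ≤ 1) :
    productBernoulli α p = pointMassMeasure (productBernoulliMass p) := by
  refine Finset.sum_congr rfl fun f _ => ?_
  rw [productBernoulliMass, ENNReal.ofReal_prod_of_nonneg fun a _ => ?_]
  · congr 1
    exact Finset.prod_congr rfl fun a _ => by cases f a <;> rfl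
  · cases f a
    · exact sub_nonneg.2 hp₁
    · exact hp₀

lemma two_mul_card_edgeSet_le (n : ℕ) : 2 * (Fintype.card (EdgeSet n) : ℝ) ≤ n ^ 2 := by
  have h := Nat.choose_le_pow_div (α := ℝ) 2 n
  rw [Sym2.card_subtype_not_diag, Fintype.card_fin]
  norm_num [Nat.factorial] at h
  linarith

theorem coupling_Gnp_Gnq (n : ℕ) (p q : ℝ) (hp : p ∈ Set.Ioo (0:ℝ) 1) (hq : q ∈ Set.Ioo (0:ℝ) 1) :
    ∃ μ : Measure ((EdgeSet n → Bool) × (EdgeSet n → Bool)),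
      IsProbabilityMeasure μ ∧
      μ.map Prod.fst = productBernoulli (EdgeSet n) p ∧
      μ.map Prod.snd = productBernoulli (EdgeSet n) q ∧
      1 - n * |p - q| / Real.sqrt (4 * q * (1 - q)) ≤ (μ {z | z.1 = z.2}).toReal := by
  have hP₁ := sum_productBernoulliMass (α := EdgeSet n) p
  have hQ₁ := sum_productBernoulliMass (α := EdgeSet n) q
  obtain ⟨μ, hμ, h_fst, h_snd, h_diag⟩ := exists_coupling_measure_diagonal_eq_sum_min
    (fun f => (productBernoulliMass_pos hp f).le) (fun f => (productBernoulliMass_pos hq f).le)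
    hP₁ hQ₁
  refine ⟨μ, hμ, ?_, ?_, ?_⟩
  · rw [h_fst, productBernoulli_eq_pointMassMeasure _ hp.1.le hp.2.le]
  · rw [h_snd, productBernoulli_eq_pointMassMeasure _ hq.1.le hq.2.le]
  have hq' : 0 < q * (1 - q) := mul_pos hq.1 (sub_pos.2 hq.2)
  rw [h_diag, sum_min_eq_one_sub_half_sum_abs hP₁ hQ₁, sub_le_sub_iff_left,
    ← pow_le_pow_iff_left₀ (by positivity) (by positivity) two_ne_zero, div_pow, div_pow, mul_pow,
    sq_abs, Real.sq_sqrt (by nlinarith)]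
  have h_tv := sq_sum_abs_sub_productBernoulliMass_le (α := EdgeSet n) hp hq
  have h_card := two_mul_card_edgeSet_le n
  calc _ ≤ 2 * Fintype.card (EdgeSet n) * ((p - q) ^ 2 / (q * (1 - q))) / 2 ^ 2 := by gcongr
    _ ≤ n ^ 2 * ((p - q) ^ 2 / (q * (1 - q))) / 2 ^ 2 := by gcongr
    _ = n ^ 2 * (p - q) ^ 2 / (4 * q * (1 - q)) := by field_simp; ring
end

section
/- Let X denote the number of isolated vertices in the random bipartite graph G(N,N,p). Then P(X = 0) ≤ exp(-μ + Δp·log(1 + μ/(Δp))), where μ = 2N(1-p)^N and Δ = 2N²(1-p)^{2N-1}. -/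
open MeasureTheory

attribute [local instance] Classical.propDecidable

/-- Adjacency in the bipartite graph on parts `V₁ = Fin N` (left) and `V₂ = Fin N` (right)
encoded by the cross-edge indicators `f`. -/
def adjB {N : ℕ} (f : Fin N × Fin N → Bool) : (Fin N ⊕ Fin N) → (Fin N ⊕ Fin N) → Prop
  | Sum.inl i, Sum.inr j => f (i, j) = true
  | Sum.inr j, Sum.inl i => f (i, j) = true
  | _, _ => False

/-- The number of isolated vertices of the bipartite graph encoded by `f` (as a real). -/
noncomputable def isoCount {N : ℕ} (f : Fin N × Fin N → Bool) : ℝ :=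
  ∑ v : Fin N ⊕ Fin N, if ∀ w, ¬ adjB f v w then (1 : ℝ) else 0

/-!
Let `F(t) = E t^X` be the generating function of the number `X` of isolated vertices, so that
`P(X = 0) ≤ F(t)` for `t ∈ [0, 1]`. Put `q = 1 - p`. For a left vertex `v`, conditioning on the
edges at `v` being absent shows `E[I_v t^(X-1)] = q^N E[t^Y]`, where `Y` counts the other isolated
vertices once the edges at `v` are deleted: the old ones and the right vertices whose only
neighbour was `v`. Bernoulli's inequality bounds the loss from the latter, and Harris's
inequality bounds the probability that a right vertex hangs on `v` alone, giving
`t E[I_v t^(X-1)] ≥ (t q^N - p (1 - t) N q^(2N-1)) F(t)`; right vertices follow by transposition.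
Summing, `t F'(t) ≥ (t μ - Δ p (1 - t)) F(t)`, so `log F(t) + μ (1 - t) + Δ p (log t + 1 - t)`
is nondecreasing on `(0, 1]` and vanishes at `1`; evaluating it at `t = Δ p / (μ + Δ p)` gives
the bound.
-/

namespace ProductBernoulli

open Finset Function

section ZeroOn

variable {α : Type*} [DecidableEq α]

def zeroOn (T : Finset α) (f : α → Bool) : α → Bool := T.piecewise ⊥ f

lemma zeroOn_le (T : Finset α) (f : α → Bool) : zeroOn T f ≤ f :=
  piecewise_le_of_le_of_le T bot_le le_rfl

lemma zeroOn_eq_self {T : Finset α} {f : α → Bool} (h : ∀ a ∈ T, f a = false) :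
    zeroOn T f = f :=
  funext fun a => by by_cases ha : a ∈ T <;> simp [zeroOn, ha, h]

lemma zeroOn_insert (a : α) (T : Finset α) (f : α → Bool) :
    zeroOn (insert a T) f = update (zeroOn T f) a false :=
  piecewise_insert ..

lemma zeroOn_update_of_notMem {T : Finset α} {a : α} (ha : a ∉ T) (f : α → Bool) (x : Bool) :
    zeroOn T (update f a x) = update (zeroOn T f) a x :=
  (update_piecewise_of_notMem (π := fun _ => Bool) T ⊥ f ha x).symm

end ZeroOn

variable {α : Type*} [Fintype α] {p : ℝ}

noncomputable def weight (p : ℝ) (f : α → Bool) : ℝ := ∏ a, if f a then p else 1 - p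

lemma weight_nonneg (hp₀ : 0 ≤ p) (hp₁ : p ≤ 1) (f : α → Bool) : 0 ≤ weight p f :=
  prod_nonneg fun a _ => by split_ifs <;> linarith

lemma weight_pos (hp₀ : 0 < p) (hp₁ : p < 1) (f : α → Bool) : 0 < weight p f :=
  prod_pos fun a _ => by split_ifs <;> linarith

variable [DecidableEq α]

noncomputable def expect (p : ℝ) (F : (α → Bool) → ℝ) : ℝ := ∑ f, weight p f * F f

lemma expect_const (c : ℝ) : expect p (fun _ : α → Bool => c) = c := by
  have h := Fintype.prod_sum (κ := fun _ : α => Bool) fun _ b => if b then p else 1 - p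
  simp only [Fintype.sum_bool, if_true, Bool.false_eq_true, if_false, add_sub_cancel,
    prod_const_one] at h
  simp only [expect, ← sum_mul, weight, ← h, one_mul]

lemma expect_sub (F G : (α → Bool) → ℝ) :
    expect p (fun f => F f - G f) = expect p F - expect p G := by
  simp only [expect, mul_sub, sum_sub_distrib]

lemma expect_const_mul (c : ℝ) (F : (α → Bool) → ℝ) :
    expect p (fun f => c * F f) = c * expect p F := by
  simp only [expect, mul_sum]
  exact sum_congr rfl fun f _ => by ring

lemma expect_sum {ι : Type*} (s : Finset ι) (F : ι → (α → Bool) → ℝ) :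
    expect p (fun f => ∑ i ∈ s, F i f) = ∑ i ∈ s, expect p (F i) := by
  simp only [expect, mul_sum]
  exact sum_comm

lemma expect_mono (hp₀ : 0 ≤ p) (hp₁ : p ≤ 1) {F G : (α → Bool) → ℝ}
    (h : ∀ f, F f ≤ G f) : expect p F ≤ expect p G :=
  sum_le_sum fun f _ => mul_le_mul_of_nonneg_left (h f) (weight_nonneg hp₀ hp₁ f)

lemma expect_nonneg (hp₀ : 0 ≤ p) (hp₁ : p ≤ 1) {F : (α → Bool) → ℝ} (h : ∀ f, 0 ≤ F f) :
    0 ≤ expect p F :=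
  sum_nonneg fun f _ => mul_nonneg (weight_nonneg hp₀ hp₁ f) (h f)

lemma expect_pos (hp₀ : 0 < p) (hp₁ : p < 1) {F : (α → Bool) → ℝ} (h : ∀ f, 0 < F f) :
    0 < expect p F :=
  sum_pos (fun f _ => mul_pos (weight_pos hp₀ hp₁ f) (h f)) univ_nonempty

lemma expect_comp_equiv (e : α ≃ α) (F : (α → Bool) → ℝ) :
    expect p (fun f => F (f ∘ e)) = expect p F := by
  have hw : ∀ f : α → Bool, weight p (f ∘ e) = weight p f := fun f =>
    e.prod_comp fun a => if f a then p else 1 - p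
  exact Fintype.sum_equiv (e.symm.arrowCongr (Equiv.refl Bool)) _ _ fun f => by
    rw [← hw]; rfl

lemma hasDerivAt_expect_pow (X : (α → Bool) → ℕ) (t : ℝ) :
    HasDerivAt (fun t => expect p (fun f => t ^ X f))
      (expect p (fun f => X f * t ^ (X f - 1))) t :=
  HasDerivAt.fun_sum fun f _ => (hasDerivAt_pow (X f) t).const_mul (weight p f)

theorem expect_eq_expect_update (a : α) (F : (α → Bool) → ℝ) :
    expect p F =
      expect p (fun f => p * F (update f a true) + (1 - p) * F (update f a false)) := by
  set W : (α → Bool) → ℝ := fun f => ∏ b ∈ univ.erase a, if f b then p else 1 - p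
  set E : (α → Bool) → Bool → ℝ := fun f x => (if x then p else 1 - p) *
    (p * F (update f a true) + (1 - p) * F (update f a false) - F (update f a x))
  set flip : (α → Bool) → (α → Bool) := fun f => update f a (!f a)
  have hflip : Involutive flip := fun f => by simp [flip]
  -- the summand of `RHS - LHS` is `W f * E f (f a)`, which changes sign when `f a` is flipped
  have hD : ∀ f, weight p f * (p * F (update f a true) + (1 - p) * F (update f a false)) -
      weight p f * F f = W f * E f (f a) := fun f => by
    rw [weight, ← mul_prod_erase _ _ (mem_univ a)]
    simp only [E, W, update_eq_self]
    ring
  have hW : ∀ f, W (flip f) = W f := fun f =>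
    prod_congr rfl fun b hb => by simp [flip, update_of_ne (ne_of_mem_erase hb)]
  have hE : ∀ f, E (flip f) (flip f a) = -E f (f a) := fun f => by
    cases h : f a <;> simp [E, flip, h] <;> ring
  have hsum : ∑ f, W f * E f (f a) = 0 := by
    have := Fintype.sum_equiv (hflip.toPerm _) (fun f => W f * E f (f a))
      (fun f => -(W f * E f (f a))) fun f => by
        rw [Involutive.coe_toPerm, hW, hE, mul_neg, neg_neg]
    rw [sum_neg_distrib] at this
    linarith
  rw [eq_comm, ← sub_eq_zero, ← expect_sub, ← hsum]
  exact sum_congr rfl fun f _ => by rw [mul_sub, hD]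

theorem expect_ite_apply_mul (a : α) (g : (α → Bool) → ℝ) :
    expect p (fun f => (if f a then 1 else 0) * g f) =
      p * expect p (fun f => g (update f a true)) := by
  rw [expect_eq_expect_update a, ← expect_const_mul]
  simp

theorem expect_ite_vanishing_mul_comp_zeroOn (T : Finset α) (F : (α → Bool) → ℝ) :
    expect p (fun f => (if ∀ a ∈ T, f a = false then 1 else 0) * F (zeroOn T f)) =
      (1 - p) ^ #T * expect p (fun f => F (zeroOn T f)) := by
  induction T using Finset.induction_on generalizing F with
  | empty => simp [zeroOn, expect]
  | @insert a T ha ih =>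
    have hT : ∀ f : α → Bool,
        (∀ b ∈ T, update f a false b = false) ↔ ∀ b ∈ T, f b = false :=
      fun f => forall₂_congr fun b hb => by rw [update_of_ne (ne_of_mem_of_not_mem hb ha)]
    simp only [zeroOn_insert a T]
    rw [expect_eq_expect_update a, card_insert_of_notMem ha, pow_succ', mul_assoc,
      ← ih fun g => F (update g a false), ← expect_const_mul]
    congr 1
    funext f
    simp [zeroOn_update_of_notMem ha, hT]

/-- Harris's inequality for the decreasing event `{f | ∀ a ∈ T, f a = false}`. -/
theorem expect_ite_vanishing_mul_le (hp₀ : 0 ≤ p) (hp₁ : p ≤ 1) (T : Finset α)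
    {g : (α → Bool) → ℝ} (hg : Monotone g) :
    expect p (fun f => (if ∀ a ∈ T, f a = false then 1 else 0) * g f) ≤
      (1 - p) ^ #T * expect p g := by
  have hvanish : ∀ f : α → Bool, (if ∀ a ∈ T, f a = false then 1 else 0) * g f =
      (if ∀ a ∈ T, f a = false then 1 else 0) * g (zeroOn T f) := fun f => by
    split_ifs with h
    · rw [zeroOn_eq_self h]
    · simp
  simp only [hvanish, expect_ite_vanishing_mul_comp_zeroOn]
  exact mul_le_mul_of_nonneg_left (expect_mono hp₀ hp₁ fun f => hg (zeroOn_le T f))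
    (pow_nonneg (by linarith) _)

end ProductBernoulli

open Finset ProductBernoulli in
theorem productBernoulli_apply {α : Type} [Fintype α] [DecidableEq α] {p : ℝ}
    (hp₀ : 0 ≤ p) (hp₁ : p ≤ 1) (s : Set (α → Bool)) :
    productBernoulli α p s = ENNReal.ofReal (expect p (s.indicator 1)) := by
  have hweight : ∀ f : α → Bool, (∏ a, if f a then ENNReal.ofReal p else ENNReal.ofReal (1 - p))
      = ENNReal.ofReal (weight p f) := fun f => by
    rw [weight, ENNReal.ofReal_prod_of_nonneg fun a _ => by split_ifs <;> linarith]
    exact prod_congr rfl fun a _ => by split_ifs <;> rfl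
  have hnonneg : ∀ f ∈ univ, 0 ≤ weight p f * s.indicator 1 f := fun f _ =>
    mul_nonneg (weight_nonneg hp₀ hp₁ f) (Set.indicator_nonneg (fun _ _ => zero_le_one) f)
  rw [productBernoulli, Measure.coe_finsetSum, Finset.sum_apply, ProductBernoulli.expect,
    ENNReal.ofReal_sum_of_nonneg hnonneg]
  refine sum_congr rfl fun f _ => ?_
  rw [Measure.smul_apply, smul_eq_mul, Measure.dirac_apply' f MeasurableSet.of_discrete, hweight,
    ENNReal.ofReal_mul (weight_nonneg hp₀ hp₁ f)]
  by_cases hf : f ∈ s <;> simp [hf]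

section DifferentialInequality

open Real Set

variable {F F' : ℝ → ℝ} {m c : ℝ}

theorem le_exp_of_mul_deriv_ge_of_mem_Ioc (hF : ∀ t, HasDerivAt F (F' t) t)
    (hpos : ∀ t ∈ Ioc 0 1, 0 < F t) (hF1 : F 1 = 1)
    (hineq : ∀ t ∈ Ioo 0 1, (t * m - c * (1 - t)) * F t ≤ t * F' t)
    {t₀ : ℝ} (ht₀ : t₀ ∈ Ioc 0 1) :
    F t₀ ≤ exp (-(m * (1 - t₀)) - c * (log t₀ + (1 - t₀))) := by
  set ψ : ℝ → ℝ := fun u => log (F u) + m * (1 - u) + c * (log u + (1 - u))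
  have hψ : ∀ u ∈ Ioc 0 1, HasDerivAt ψ (F' u / F u + m * (-1) + c * (u⁻¹ + (-1))) u :=
    fun u hu =>
      (((hF u).log (hpos u hu).ne').add (((hasDerivAt_id u).const_sub 1).const_mul m)).add
        (((hasDerivAt_log hu.1.ne').add ((hasDerivAt_id u).const_sub 1)).const_mul c)
  have hsub : Icc t₀ 1 ⊆ Ioc 0 1 := fun u hu => ⟨ht₀.1.trans_le hu.1, hu.2⟩
  have hmono : MonotoneOn ψ (Icc t₀ 1) := by
    refine monotoneOn_of_hasDerivWithinAt_nonneg (convex_Icc t₀ 1)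
      (fun u hu => (hψ u (hsub hu)).continuousAt.continuousWithinAt)
      (fun u hu => (hψ u (hsub (interior_subset hu))).hasDerivWithinAt) fun u hu => ?_
    rw [interior_Icc] at hu
    have hu₀ : 0 < u := ht₀.1.trans hu.1
    have hFu := hpos u ⟨hu₀, hu.2.le⟩
    have key := hineq u ⟨hu₀, hu.2⟩
    have : F' u / F u + m * (-1) + c * (u⁻¹ + (-1)) =
        (u * F' u - (u * m - c * (1 - u)) * F u) / (u * F u) := by
      field_simp
      ring
    rw [this]
    exact div_nonneg (by linarith) (by positivity)
  have hψ1 : ψ 1 = 0 := by simp [ψ, hF1]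
  have hle : ψ t₀ ≤ ψ 1 := hmono ⟨le_rfl, ht₀.2⟩ ⟨ht₀.2, le_rfl⟩ ht₀.2
  rw [← exp_log (hpos t₀ ht₀)]
  gcongr
  simp only [ψ] at hle
  linarith

lemma exponent_eq_of_optimal (hm : 0 < m) (hc : 0 < c) :
    -(m * (1 - c / (m + c))) - c * (log (c / (m + c)) + (1 - c / (m + c))) =
      -m + c * log (1 + m / c) := by
  have hmc : 0 < m + c := by linarith
  have hlog : log (c / (m + c)) = -log (1 + m / c) := by
    rw [← log_inv]
    congr 1
    field_simp
    ring
  rw [hlog]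
  field_simp
  ring

theorem le_exp_of_mul_deriv_ge (hm : 0 < m) (hc : 0 < c) (hF : ∀ t, HasDerivAt F (F' t) t)
    (hpos : ∀ t ∈ Ioc 0 1, 0 < F t) (hF1 : F 1 = 1)
    (hineq : ∀ t ∈ Ioo 0 1, (t * m - c * (1 - t)) * F t ≤ t * F' t) :
    F (c / (m + c)) ≤ exp (-m + c * log (1 + m / c)) := by
  have hmc : 0 < m + c := by linarith
  rw [← exponent_eq_of_optimal hm hc]
  exact le_exp_of_mul_deriv_ge_of_mem_Ioc hF hpos hF1 hineq
    ⟨div_pos hc hmc, (div_le_one hmc).2 (by linarith)⟩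

end DifferentialInequality

namespace BipartiteIsolated

open Finset Function ProductBernoulli

variable {N : ℕ} {p t : ℝ}

noncomputable def isolatedVerts (f : Fin N × Fin N → Bool) : Finset (Fin N ⊕ Fin N) :=
  {v | ∀ w, ¬ adjB f v w}

lemma isoCount_eq_card (f : Fin N × Fin N → Bool) : isoCount f = #(isolatedVerts f) := by
  rw [isoCount, isolatedVerts, ← sum_boole]

lemma inl_mem_isolatedVerts {f : Fin N × Fin N → Bool} {i : Fin N} :
    .inl i ∈ isolatedVerts f ↔ ∀ j, f (i, j) = false := by
  simp [isolatedVerts, Sum.forall, adjB]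

lemma inr_mem_isolatedVerts {f : Fin N × Fin N → Bool} {j : Fin N} :
    .inr j ∈ isolatedVerts f ↔ ∀ i, f (i, j) = false := by
  simp [isolatedVerts, Sum.forall, adjB]

lemma isolatedVerts_antitone : Antitone (isolatedVerts (N := N)) := by
  intro f g hfg v hv
  cases v with
  | inl i => exact inl_mem_isolatedVerts.2 fun j =>
      Bool.eq_false_of_le_false (inl_mem_isolatedVerts.1 hv j ▸ hfg (i, j))
  | inr j => exact inr_mem_isolatedVerts.2 fun i =>
      Bool.eq_false_of_le_false (inr_mem_isolatedVerts.1 hv i ▸ hfg (i, j))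

lemma isolatedVerts_comp_swap (f : Fin N × Fin N → Bool) :
    isolatedVerts (f ∘ Prod.swap) = (isolatedVerts f).map (Equiv.sumComm _ _).toEmbedding := by
  ext v
  cases v <;> simp [inl_mem_isolatedVerts, inr_mem_isolatedVerts]

def rowEdges (i : Fin N) : Finset (Fin N × Fin N) := {i} ×ˢ univ

lemma card_rowEdges (i : Fin N) : #(rowEdges i) = N := by simp [rowEdges]

lemma inl_mem_isolatedVerts_iff_rowEdges {f : Fin N × Fin N → Bool} {i : Fin N} :
    .inl i ∈ isolatedVerts f ↔ ∀ a ∈ rowEdges i, f a = false := by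
  simp [inl_mem_isolatedVerts, rowEdges]

lemma zeroOn_rowEdges_apply (f : Fin N × Fin N → Bool) (i i' j : Fin N) :
    zeroOn (rowEdges i) f (i', j) = if i' = i then false else f (i', j) := by
  simp [zeroOn, rowEdges, Finset.piecewise, eq_comm]

noncomputable def pendants (f : Fin N × Fin N → Bool) (i : Fin N) : Finset (Fin N) :=
  {j | f (i, j) = true ∧ ∀ i' ≠ i, f (i', j) = false}

lemma card_erase_isolatedVerts_zeroOn_rowEdges (f : Fin N × Fin N → Bool) (i : Fin N) :
    #((isolatedVerts (zeroOn (rowEdges i) f)).erase (.inl i)) =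
      #((isolatedVerts f).erase (.inl i)) + #(pendants f i) := by
  have hunion : (isolatedVerts (zeroOn (rowEdges i) f)).erase (.inl i) =
      (isolatedVerts f).erase (.inl i) ∪ (pendants f i).map Embedding.inr := by
    ext (i' | j)
    · by_cases h : i' = i <;> simp [h, inl_mem_isolatedVerts, zeroOn_rowEdges_apply]
    · have key : (∀ i' ≠ i, f (i', j) = false) ↔
          (∀ i', f (i', j) = false) ∨ (f (i, j) = true ∧ ∀ i' ≠ i, f (i', j) = false) := by
        refine ⟨fun h => ?_, ?_⟩
        · cases hij : f (i, j)
          · exact .inl fun i' => if hi' : i' = i then hi' ▸ hij else h i' hi'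
          · exact .inr ⟨rfl, h⟩
        · rintro (h | ⟨-, h⟩)
          exacts [fun i' _ => h i', h]
      simpa [inr_mem_isolatedVerts, zeroOn_rowEdges_apply, pendants] using key
  have hdisj : Disjoint ((isolatedVerts f).erase (.inl i)) ((pendants f i).map Embedding.inr) := by
    simp only [disjoint_left, mem_map, mem_erase, pendants, mem_filter]
    rintro _ ⟨-, hiso⟩ ⟨j, ⟨-, hij, -⟩, rfl⟩
    simp [inr_mem_isolatedVerts.1 hiso i] at hij
  rw [hunion, card_union_of_disjoint hdisj, card_map]

lemma card_erase_isolatedVerts_le_update (f : Fin N × Fin N → Bool) (i j : Fin N) :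
    #((isolatedVerts f).erase (.inl i)) ≤
      #((isolatedVerts (update f (i, j) true)).erase (.inl i)) + 1 := by
  have hsub : (isolatedVerts f).erase (.inl i) ⊆
      insert (.inr j) ((isolatedVerts (update f (i, j) true)).erase (.inl i)) := by
    intro v hv
    rw [mem_erase] at hv
    rw [mem_insert, mem_erase]
    rcases hv with ⟨hvi, hv⟩
    cases v with
    | inl i' =>
      have hi' : i' ≠ i := fun h => hvi (h ▸ rfl)
      refine .inr ⟨hvi, inl_mem_isolatedVerts.2 fun j' => ?_⟩
      rw [update_of_ne (by simp [hi']), inl_mem_isolatedVerts.1 hv]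
    | inr j' =>
      by_cases hj' : j' = j
      · exact .inl (hj' ▸ rfl)
      refine .inr ⟨hvi, inr_mem_isolatedVerts.2 fun i' => ?_⟩
      rw [update_of_ne (by simp [hj']), inr_mem_isolatedVerts.1 hv]
  exact (card_le_card hsub).trans (card_insert_le _ _)

lemma ite_mem_pendants (f : Fin N × Fin N → Bool) (i j : Fin N) :
    (if j ∈ pendants f i then (1 : ℝ) else 0) = (if f (i, j) then 1 else 0) *
      (if ∀ a ∈ (univ.erase i) ×ˢ {j}, f a = false then 1 else 0) := by
  have hmem : j ∈ pendants f i ↔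
      f (i, j) = true ∧ ∀ a ∈ (univ.erase i) ×ˢ {j}, f a = false := by
    simp only [pendants, mem_filter, mem_univ, true_and, mem_product, mem_erase, mem_singleton,
      Prod.forall]
    exact and_congr_right' ⟨fun h i' j' ⟨⟨hi', _⟩, hj'⟩ => hj' ▸ h i' hi',
      fun h i' hi' => h i' j ⟨⟨hi', trivial⟩, rfl⟩⟩
  rw [if_congr hmem rfl rfl, ite_and]
  split_ifs <;> simp

lemma mul_expect_ite_mem_pendants_le (hp₀ : 0 ≤ p) (hp₁ : p ≤ 1) (ht₀ : 0 ≤ t) (ht₁ : t ≤ 1)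
    (i j : Fin N) :
    t * expect p (fun f => (if j ∈ pendants f i then 1 else 0) *
        t ^ #((isolatedVerts f).erase (.inl i))) ≤
      p * (1 - p) ^ (N - 1) * expect p (fun f => t ^ #((isolatedVerts f).erase (.inl i))) := by
  set S : (Fin N × Fin N → Bool) → ℕ := fun f => #((isolatedVerts f).erase (.inl i))
  set T := (univ.erase i) ×ˢ {j} with hTdef
  have hT : ∀ f, (∀ a ∈ T, update f (i, j) true a = false) ↔ ∀ a ∈ T, f a = false :=
    fun f => forall₂_congr fun a ha => by rw [update_of_ne fun h => by simp [T, h] at ha]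
  have hcard : #T = N - 1 := by simp [T, card_erase_of_mem]
  have hmono : Monotone fun f => t ^ S (update f (i, j) true) := fun f g hfg =>
    pow_le_pow_of_le_one ht₀ ht₁ <| card_le_card <| erase_subset_erase _ <|
      isolatedVerts_antitone <| update_le_update_iff.2 ⟨le_rfl, fun b _ => hfg b⟩
  -- condition on the edge `(i, j)`, apply Harris's inequality to the rest of column `j`,
  -- and delete the edge again at the cost of one factor `t`
  calc t * expect p (fun f => (if j ∈ pendants f i then 1 else 0) * t ^ S f)
      = t * (p * expect p (fun f => (if ∀ a ∈ T, f a = false then 1 else 0) *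
          t ^ S (update f (i, j) true))) := by
        simp only [ite_mem_pendants, mul_assoc, expect_ite_apply_mul, ← hTdef, hT]
    _ ≤ t * (p * ((1 - p) ^ #T * expect p (fun f => t ^ S (update f (i, j) true)))) := by
        gcongr
        exact expect_ite_vanishing_mul_le hp₀ hp₁ T hmono
    _ = p * (1 - p) ^ (N - 1) * expect p (fun f => t * t ^ S (update f (i, j) true)) := by
        rw [expect_const_mul, hcard]
        ring
    _ ≤ p * (1 - p) ^ (N - 1) * expect p (fun f => t ^ S f) := by
        gcongr
        refine expect_mono hp₀ hp₁ fun f => ?_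
        rw [← pow_succ']
        exact pow_le_pow_of_le_one ht₀ ht₁ (card_erase_isolatedVerts_le_update f i j)

lemma expect_ite_inl_mem_isolatedVerts (i : Fin N) (t : ℝ) :
    expect p (fun f =>
        (if .inl i ∈ isolatedVerts f then 1 else 0) * t ^ (#(isolatedVerts f) - 1)) =
      (1 - p) ^ N *
        expect p (fun f => t ^ #((isolatedVerts (zeroOn (rowEdges i) f)).erase (.inl i))) := by
  have h := expect_ite_vanishing_mul_comp_zeroOn (p := p) (rowEdges i)
    fun g => t ^ #((isolatedVerts g).erase (.inl i))
  rw [card_rowEdges] at h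
  rw [← h]
  congr 1
  funext f
  by_cases h : .inl i ∈ isolatedVerts f
  · rw [if_pos h, if_pos (inl_mem_isolatedVerts_iff_rowEdges.1 h),
      zeroOn_eq_self (inl_mem_isolatedVerts_iff_rowEdges.1 h), card_erase_of_mem h]
  · rw [if_neg h, if_neg (mt inl_mem_isolatedVerts_iff_rowEdges.2 h), zero_mul, zero_mul]

lemma le_mul_expect_zeroOn_rowEdges (hp₀ : 0 ≤ p) (hp₁ : p ≤ 1) (ht₀ : 0 ≤ t) (ht₁ : t ≤ 1)
    (i : Fin N) :
    (t - N * p * (1 - p) ^ (N - 1) * (1 - t)) *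
        expect p (fun f => t ^ #((isolatedVerts f).erase (.inl i))) ≤
      t * expect p (fun f => t ^ #((isolatedVerts (zeroOn (rowEdges i) f)).erase (.inl i))) := by
  set S : (Fin N × Fin N → Bool) → ℕ := fun f => #((isolatedVerts f).erase (.inl i))
  set H := expect p (fun f => t ^ S f)
  set P := fun (j : Fin N) f => (if j ∈ pendants f i then 1 else 0) * t ^ S f
  have hpoint : ∀ f, t ^ S f - (1 - t) * ∑ j, P j f ≤ t ^ S (zeroOn (rowEdges i) f) := by
    intro f
    have hbern := one_add_mul_le_pow (a := t - 1) (by linarith) #(pendants f i)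
    rw [add_sub_cancel] at hbern
    rw [← sum_mul, show S (zeroOn (rowEdges i) f) = S f + #(pendants f i) from
      card_erase_isolatedVerts_zeroOn_rowEdges f i, pow_add]
    simp only [sum_boole, Finset.filter_mem_eq_inter, univ_inter]
    nlinarith [mul_le_mul_of_nonneg_left hbern (pow_nonneg ht₀ (S f))]
  have hsum : ∑ j, t * expect p (P j) ≤ N * (p * (1 - p) ^ (N - 1) * H) := by
    refine (sum_le_sum fun j _ => mul_expect_ite_mem_pendants_le hp₀ hp₁ ht₀ ht₁ i j).trans_eq ?_
    rw [sum_const, card_univ, Fintype.card_fin, nsmul_eq_mul]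
  calc (t - N * p * (1 - p) ^ (N - 1) * (1 - t)) * H
      = t * H - (1 - t) * (N * (p * (1 - p) ^ (N - 1) * H)) := by ring
    _ ≤ t * H - (1 - t) * ∑ j, t * expect p (P j) := by gcongr
    _ = t * expect p (fun f => t ^ S f - (1 - t) * ∑ j, P j f) := by
        rw [expect_sub, expect_const_mul, expect_sum, ← mul_sum]
        ring
    _ ≤ t * expect p (fun f => t ^ S (zeroOn (rowEdges i) f)) := by
        gcongr
        exact expect_mono hp₀ hp₁ hpoint

lemma le_mul_expect_ite_inl_mem_isolatedVerts (hp₀ : 0 ≤ p) (hp₁ : p ≤ 1) (ht₀ : 0 ≤ t)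
    (ht₁ : t ≤ 1) (i : Fin N) :
    (t * (1 - p) ^ N - N * p * (1 - p) ^ (2 * N - 1) * (1 - t)) *
        expect p (fun f : Fin N × Fin N → Bool => t ^ #(isolatedVerts f)) ≤
      t * expect p (fun f =>
        (if .inl i ∈ isolatedVerts f then 1 else 0) * t ^ (#(isolatedVerts f) - 1)) := by
  set A := N * p * (1 - p) ^ (N - 1) * (1 - t)
  set F := expect p (fun f : Fin N × Fin N → Bool => t ^ #(isolatedVerts f))
  set H := expect p (fun f => t ^ #((isolatedVerts f).erase (.inl i)))
  set G := expect p (fun f => t ^ #((isolatedVerts (zeroOn (rowEdges i) f)).erase (.inl i)))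
  have hFH : F ≤ H :=
    expect_mono hp₀ hp₁ fun f => pow_le_pow_of_le_one ht₀ ht₁ (card_erase_le ..)
  have hHG : (t - A) * H ≤ t * G := le_mul_expect_zeroOn_rowEdges hp₀ hp₁ ht₀ ht₁ i
  have hFG : (t - A) * F ≤ t * G := by
    rcases le_or_gt 0 (t - A) with hA | hA
    · exact (mul_le_mul_of_nonneg_left hFH hA).trans hHG
    · have hF : 0 ≤ F := expect_nonneg hp₀ hp₁ fun f => pow_nonneg ht₀ _
      have hG : 0 ≤ G := expect_nonneg hp₀ hp₁ fun f => pow_nonneg ht₀ _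
      nlinarith
  have hcoef : t * (1 - p) ^ N - N * p * (1 - p) ^ (2 * N - 1) * (1 - t) =
      (1 - p) ^ N * (t - A) := by
    have : 2 * N - 1 = N + (N - 1) := by have := i.pos; omega
    rw [this, pow_add]
    ring
  rw [expect_ite_inl_mem_isolatedVerts, hcoef, mul_assoc, mul_left_comm t]
  exact mul_le_mul_of_nonneg_left hFG (pow_nonneg (by linarith) _)

lemma expect_ite_inr_mem_isolatedVerts (j : Fin N) (t : ℝ) :
    expect p (fun f =>
        (if .inr j ∈ isolatedVerts f then 1 else 0) * t ^ (#(isolatedVerts f) - 1)) =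
      expect p (fun f =>
        (if .inl j ∈ isolatedVerts f then 1 else 0) * t ^ (#(isolatedVerts f) - 1)) := by
  rw [← expect_comp_equiv (Equiv.prodComm _ _)]
  simp [isolatedVerts_comp_swap]

theorem le_mul_expect_card_isolatedVerts (hp₀ : 0 ≤ p) (hp₁ : p ≤ 1) (ht₀ : 0 ≤ t)
    (ht₁ : t ≤ 1) :
    (t * (2 * N * (1 - p) ^ N) - 2 * N ^ 2 * (1 - p) ^ (2 * N - 1) * p * (1 - t)) *
        expect p (fun f : Fin N × Fin N → Bool => t ^ #(isolatedVerts f)) ≤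
      t * expect p (fun f : Fin N × Fin N → Bool =>
        #(isolatedVerts f) * t ^ (#(isolatedVerts f) - 1)) := by
  set F := expect p (fun f : Fin N × Fin N → Bool => t ^ #(isolatedVerts f))
  set E := fun i : Fin N => expect p (fun f =>
    (if .inl i ∈ isolatedVerts f then 1 else 0) * t ^ (#(isolatedVerts f) - 1))
  have hX : ∀ f : Fin N × Fin N → Bool,
      (#(isolatedVerts f) : ℝ) * t ^ (#(isolatedVerts f) - 1) =
        ∑ v, (if v ∈ isolatedVerts f then 1 else 0) * t ^ (#(isolatedVerts f) - 1) := fun f => by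
    rw [← sum_mul]
    simp
  simp only [hX]
  rw [expect_sum, Fintype.sum_sum_type]
  simp only [expect_ite_inr_mem_isolatedVerts]
  calc (t * (2 * N * (1 - p) ^ N) - 2 * N ^ 2 * (1 - p) ^ (2 * N - 1) * p * (1 - t)) * F
      = ∑ _i : Fin N,
          2 * ((t * (1 - p) ^ N - N * p * (1 - p) ^ (2 * N - 1) * (1 - t)) * F) := by
        rw [sum_const, card_univ, Fintype.card_fin, nsmul_eq_mul]
        ring
    _ ≤ ∑ i : Fin N, 2 * (t * E i) := sum_le_sum fun i _ => mul_le_mul_of_nonneg_left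
        (le_mul_expect_ite_inl_mem_isolatedVerts hp₀ hp₁ ht₀ ht₁ i) zero_le_two
    _ = t * (∑ i, E i + ∑ i, E i) := by
        rw [← sum_add_distrib, mul_sum]
        exact sum_congr rfl fun i _ => by ring

end BipartiteIsolated

open ProductBernoulli BipartiteIsolated in
theorem prob_no_isolated_upper (N : ℕ) (p : ℝ) (hp0 : 0 < p) (hp1 : p < 1) :
    productBernoulli (Fin N × Fin N) p {f | isoCount f = 0} ≤
      ENNReal.ofReal (Real.exp (-(2 * N * (1 - p)^N) +
        (2 * N^2 * (1 - p)^(2 * N - 1)) * p *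
          Real.log (1 + (2 * N * (1 - p)^N) / ((2 * N^2 * (1 - p)^(2 * N - 1)) * p)))) := by
  have hq : 0 < 1 - p := by linarith
  have hind : ∀ {t : ℝ}, 0 ≤ t → ∀ f : Fin N × Fin N → Bool,
      {f | isoCount f = 0}.indicator 1 f ≤ t ^ (isolatedVerts f).card := fun ht f => by
    by_cases hf : isoCount f = 0
    · simp_all [isoCount_eq_card]
    · simp [hf, pow_nonneg ht]
  rw [productBernoulli_apply hp0.le hp1.le]
  gcongr
  rcases N.eq_zero_or_pos with rfl | hN
  · simpa [ProductBernoulli.expect_const] using expect_mono hp0.le hp1.le (hind zero_le_one)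
  have hm : 0 < 2 * N * (1 - p) ^ N := by positivity
  have hc : 0 < 2 * N ^ 2 * (1 - p) ^ (2 * N - 1) * p := by positivity
  refine (expect_mono hp0.le hp1.le (hind (by positivity))).trans <|
    le_exp_of_mul_deriv_ge hm hc (hasDerivAt_expect_pow _)
      (fun t ht => expect_pos hp0 hp1 fun f => pow_pos ht.1 _)
      (by simp [ProductBernoulli.expect_const])
      fun t ht => le_mul_expect_card_isolatedVerts hp0.le hp1.le ht.1.le ht.2.le
end

section
/- Let σ > 0 and let X ≥ 0 be a random variable with -(d/ds) log E[e^{-sX}] ≥ μ·e^{-s}·(1 - (e^s - 1)σ) for all s ∈ [0, log(1 + 1/σ)], where μ > 0. Then P(X = 0) ≤ exp(-μ + μσ·log(1 + 1/σ)). -/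
/-!
With `f t = log E[exp (-t X)]`, the hypothesis reads `f' t ≤ m σ - m (1 + σ) exp (-t)`, so
comparing `f` with this antiderivative on `[0, λ]` gives
`f λ ≤ -m ((1 + σ) (1 - exp (-λ)) - σ λ)`, and `λ = log (1 + 1/σ)` makes
`(1 + σ) (1 - exp (-λ)) = 1`. Chernoff's bound `P(X = 0) ≤ E[exp (-λ X)] = exp (f λ)`
finishes.
Measurability of `X` is not assumed: without it the Laplace transform is the junk value `0` away
from `t = 0`, so `f` would vanish identically, contradicting `f' 0 ≤ -m < 0`.
-/

open MeasureTheory ProbabilityTheory Real Set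

theorem sub_le_sub_of_hasDerivAt_le {f g f' g' : ℝ → ℝ} {a b : ℝ} (hab : a ≤ b)
    (hf : ∀ s ∈ Icc a b, HasDerivAt f (f' s) s) (hg : ∀ s ∈ Icc a b, HasDerivAt g (g' s) s)
    (hle : ∀ s ∈ Ioo a b, f' s ≤ g' s) : f b - f a ≤ g b - g a := by
  have hmono : MonotoneOn (g - f) (Icc a b) := by
    refine monotoneOn_of_hasDerivWithinAt_nonneg (convex_Icc a b) (f' := g' - f')
      (fun s hs ↦ ((hg s hs).sub (hf s hs)).continuousAt.continuousWithinAt)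
      (fun s hs ↦ ?_) (fun s hs ↦ ?_)
    · rw [interior_Icc] at hs
      have hs' := Ioo_subset_Icc_self hs
      exact ((hg s hs').sub (hf s hs')).hasDerivWithinAt
    · rw [interior_Icc] at hs
      exact sub_nonneg.2 (hle s hs)
  have := hmono (left_mem_Icc.2 hab) (right_mem_Icc.2 hab) hab
  simp only [Pi.sub_apply] at this
  linarith

theorem sub_le_of_neg_deriv_ge_exp_neg_mul {f : ℝ → ℝ} {m σ lam : ℝ} (hlam : 0 ≤ lam)
    (hf : ∀ s ∈ Icc 0 lam, ∃ d, HasDerivAt f d s ∧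
      -d ≥ m * exp (-s) * (1 - (exp s - 1) * σ)) :
    f lam - f 0 ≤ -m * ((1 + σ) * (1 - exp (-lam)) - σ * lam) := by
  choose! f' hf' hf'_le using hf
  have hG (s : ℝ) : HasDerivAt (fun t ↦ m * σ * t + m * (1 + σ) * exp (-t))
      (m * σ - m * (1 + σ) * exp (-s)) s := by
    refine (((hasDerivAt_id s).const_mul (m * σ)).add
      ((hasDerivAt_neg s).exp.const_mul (m * (1 + σ)))).congr_deriv ?_
    ring
  have key := sub_le_sub_of_hasDerivAt_le hlam hf' (fun s _ ↦ hG s) fun s hs ↦ by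
    have h := hf'_le s (Ioo_subset_Icc_self hs)
    have : exp (-s) * exp s = 1 := by rw [← exp_add]; simp
    linear_combination h + m * σ * this
  simp only [neg_zero, exp_zero] at key
  linarith

theorem one_add_mul_one_sub_exp_neg_log {σ : ℝ} (hσ : 0 < σ) :
    (1 + σ) * (1 - exp (-log (1 + 1 / σ))) = 1 := by
  rw [exp_neg, exp_log (by positivity)]
  field_simp
  ring

section

variable {Ω : Type*} [MeasurableSpace Ω] {μ : Measure Ω} {X : Ω → ℝ}

theorem cgf_eq_zero_of_not_aestronglyMeasurable [IsProbabilityMeasure μ]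
    (hX : ¬AEStronglyMeasurable X μ) (t : ℝ) : cgf X μ t = 0 := by
  rcases eq_or_ne t 0 with rfl | ht
  · exact cgf_zero
  refine cgf_undef fun h_int ↦ hX ?_
  refine ((measurable_log.comp_aemeasurable h_int.aemeasurable).div_const t)
    |>.aestronglyMeasurable.congr (.of_forall fun ω ↦ ?_)
  simp [log_exp, ht]

theorem aestronglyMeasurable_of_hasDerivAt_cgf_neg [IsProbabilityMeasure μ] {d s : ℝ}
    (h : HasDerivAt (fun t ↦ cgf X μ (-t)) d s) (hd : d ≠ 0) : AEStronglyMeasurable X μ := by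
  by_contra hX
  simp only [cgf_eq_zero_of_not_aestronglyMeasurable hX] at h
  exact hd (h.unique (hasDerivAt_const s 0))

theorem integrable_exp_mul_of_nonpos_of_nonneg [IsFiniteMeasure μ] {t : ℝ} (ht : t ≤ 0)
    (hX : AEMeasurable X μ) (hX_nonneg : ∀ ω, 0 ≤ X ω) :
    Integrable (fun ω ↦ exp (t * X ω)) μ :=
  .of_mem_Icc 0 1 (measurable_exp.comp_aemeasurable (hX.const_mul t)) <| .of_forall fun ω ↦
    ⟨(exp_pos _).le, exp_le_one_iff.2 (mul_nonpos_of_nonpos_of_nonneg ht (hX_nonneg ω))⟩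

end

theorem upper_bound_from_log_deriv {Ω : Type*} [MeasurableSpace Ω] (μ : Measure Ω)
    [IsProbabilityMeasure μ] (X : Ω → ℝ) (hXnn : ∀ ω, 0 ≤ X ω)
    (m σ : ℝ) (hm : 0 < m) (hσ : 0 < σ)
    (hderiv : ∀ s ∈ Set.Icc (0:ℝ) (Real.log (1 + 1/σ)), ∃ d : ℝ,
      HasDerivAt (fun t : ℝ => Real.log (∫ ω, Real.exp (-t * X ω) ∂μ)) d s ∧
        -d ≥ m * Real.exp (-s) * (1 - (Real.exp s - 1) * σ)) :
    μ {ω | X ω = 0} ≤ ENNReal.ofReal (Real.exp (-m + m * σ * Real.log (1 + 1/σ))) := by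
  set lam := log (1 + 1 / σ)
  have hlam : 0 ≤ lam := log_nonneg (by simp [hσ.le])
  have hderiv' : ∀ s ∈ Icc 0 lam, ∃ d, HasDerivAt (fun t ↦ cgf X μ (-t)) d s ∧
      -d ≥ m * exp (-s) * (1 - (exp s - 1) * σ) := hderiv
  have hX : AEStronglyMeasurable X μ := by
    obtain ⟨d, hd, hd_ge⟩ := hderiv' 0 ⟨le_rfl, hlam⟩
    simp only [neg_zero, exp_zero, sub_self, zero_mul, sub_zero, mul_one] at hd_ge
    exact aestronglyMeasurable_of_hasDerivAt_cgf_neg hd (by linarith)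
  have hcgf : cgf X μ (-lam) ≤ -m + m * σ * lam := by
    have := sub_le_of_neg_deriv_ge_exp_neg_mul hlam hderiv'
    rw [one_add_mul_one_sub_exp_neg_log hσ, neg_zero, cgf_zero] at this
    linarith
  have hchernoff := measure_le_le_exp_cgf 0 (neg_nonpos.2 hlam)
    (integrable_exp_mul_of_nonpos_of_nonneg (neg_nonpos.2 hlam) hX.aemeasurable hXnn)
  rw [mul_zero, zero_add] at hchernoff
  calc μ {ω | X ω = 0} ≤ μ {ω | X ω ≤ 0} := measure_mono fun ω hω ↦ le_of_eq hω
    _ = ENNReal.ofReal (μ.real {ω | X ω ≤ 0}) := (ofReal_measureReal (measure_ne_top _ _)).symm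
    _ ≤ _ := ENNReal.ofReal_le_ofReal (hchernoff.trans (exp_le_exp.2 hcgf))
end

section
/- Let G(N,N,p) be the bipartite random graph, fix v ∈ V₁, and let X_v, Y_v, Γ(v) be as in the decomposition X = I_v + X_v - Y_v. Then for all s ≥ 0, E[e^{-sX}] ≤ E[e^{-sX_v}]·∏_{w ∈ V₂}(1 + (e^s - 1)·(1-p)^{N-1}·p), and hence E[e^{-sX}] ≤ E[e^{-sX_v}]·exp((e^s - 1)·N·(1-p)^{N-1}·p). -/
open MeasureTheory

attribute [local instance] Classical.propDecidable

/-- Indicator that the vertex `v` is isolated. -/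
noncomputable def isoInd {N : ℕ} (v : Fin N ⊕ Fin N) (f : Fin N × Fin N → Bool) : ℝ :=
  if ∀ w, ¬ adjB f v w then 1 else 0

/-- Indicator `I_w^v` that `w` is isolated when ignoring the edge status of pairs
involving `v`, i.e. `w` has no neighbors among pairs not involving `v`. -/
noncomputable def isoIndAway {N : ℕ} (v w : Fin N ⊕ Fin N) (f : Fin N × Fin N → Bool) : ℝ :=
  if ∀ u, u ≠ v → ¬ adjB f w u then 1 else 0

/-- `X_v = ∑_{w ≠ v} I_w^v`. -/
noncomputable def Xv {N : ℕ} (v : Fin N ⊕ Fin N) (f : Fin N × Fin N → Bool) : ℝ :=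
  ∑ w : Fin N ⊕ Fin N, if w ≠ v then isoIndAway v w f else 0

/-- `Y_v = ∑_{w ∈ Γ(v)} I_w^v`, the sum over the neighborhood of `v`. -/
noncomputable def Yv {N : ℕ} (v : Fin N ⊕ Fin N) (f : Fin N × Fin N → Bool) : ℝ :=
  ∑ w : Fin N ⊕ Fin N, if adjB f v w then isoIndAway v w f else 0

/-!
Pointwise `X ≥ X_v - Y_v`, so it suffices to bound `E[e^{-sX_v} e^{sY_v}]`. Negating the edge
indicators at `v` (the row `i`) maps the product measure to a product measure (with `p` and
`1 - p` swapped on that row), leaves `X_v` unchanged and turns `Y_v` into the number of right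
vertices without any edge, which is decreasing. The Harris inequality for that product measure
therefore gives `E[e^{-sX_v} e^{sY_v}] ≤ E[e^{-sX_v}] E[e^{sY_v}]`. Finally `e^{sY_v}` is a
product over the columns `j`, each factor being `e^s` exactly when the column is the indicator
of `i`, which has probability `p (1-p)^{N-1}`; the columns are independent.
-/

open Finset

section Harris

variable {α : Type*} [Fintype α]

theorem fkg_of_monotone_of_antitone [DistribLattice α] [OrderBot α] {μ F G : α → ℝ} (hμ₀ : 0 ≤ μ)
    (hμ : ∀ a b, μ a * μ b ≤ μ (a ⊓ b) * μ (a ⊔ b)) (hF₀ : 0 ≤ F) (hF : Monotone F)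
    (hG : Antitone G) :
    (∑ a, μ a) * ∑ a, μ a * (F a * G a) ≤ (∑ a, μ a * F a) * ∑ a, μ a * G a := by
  have := fkg (μ := μ) (f := F) (g := fun a => G ⊥ - G a) hμ₀ hF₀
    (fun a => sub_nonneg.2 (hG bot_le)) hF (fun a b hab => sub_le_sub_left (hG hab) _) hμ
  have hbot : ∑ a, μ a * (F a * G ⊥) = (∑ a, μ a * F a) * G ⊥ := by
    simp only [sum_mul, mul_assoc]
  simp only [mul_sub, sum_sub_distrib, ← sum_mul, hbot] at this
  linarith

theorem prod_mul_prod_eq_prod_inf_mul_prod_sup (q : α → Bool → ℝ) (f g : α → Bool) :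
    (∏ a, q a (f a)) * ∏ a, q a (g a) = (∏ a, q a ((f ⊓ g) a)) * ∏ a, q a ((f ⊔ g) a) := by
  simp only [← prod_mul_distrib, Pi.inf_apply, Pi.sup_apply]
  refine prod_congr rfl fun a _ => ?_
  cases f a <;> cases g a <;> simp [mul_comm]

theorem harris_of_monotone_of_antitone [DecidableEq α] {q : α → Bool → ℝ}
    (hq₀ : ∀ a b, 0 ≤ q a b) (hq₁ : ∀ a, ∑ b, q a b = 1)
    {F G : (α → Bool) → ℝ} (hF₀ : 0 ≤ F) (hF : Monotone F) (hG : Antitone G) :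
    ∑ f, (∏ a, q a (f a)) * (F f * G f) ≤
      (∑ f, (∏ a, q a (f a)) * F f) * ∑ f, (∏ a, q a (f a)) * G f := by
  have hμ₁ : ∑ f : α → Bool, ∏ a, q a (f a) = 1 := by
    rw [← Fintype.prod_sum, prod_congr rfl fun a _ => hq₁ a, prod_const_one]
  simpa [hμ₁] using fkg_of_monotone_of_antitone (fun f => prod_nonneg fun a _ => hq₀ a (f a))
    (fun f g => (prod_mul_prod_eq_prod_inf_mul_prod_sup q f g).le) hF₀ hF hG

end Harris

def bernoulliWeight (p : ℝ) (b : Bool) : ℝ := if b then p else 1 - p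

theorem bernoulliWeight_nonneg {p : ℝ} (hp0 : 0 ≤ p) (hp1 : p ≤ 1) (b : Bool) :
    0 ≤ bernoulliWeight p b := by
  cases b <;> simp [bernoulliWeight, hp0, hp1]

theorem sum_bernoulliWeight (p : ℝ) : ∑ b, bernoulliWeight p b = 1 := by
  simp [bernoulliWeight]

theorem integral_productBernoulli {α : Type} [Fintype α] [DecidableEq α] {p : ℝ} (hp0 : 0 ≤ p)
    (hp1 : p ≤ 1) (H : (α → Bool) → ℝ) :
    ∫ f, H f ∂productBernoulli α p = ∑ f, (∏ a, bernoulliWeight p (f a)) * H f := by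
  rw [productBernoulli, integral_finsetSum_measure fun f _ => Integrable.of_finite.smul_measure
    (ENNReal.prod_ne_top fun a _ => by split <;> exact ENNReal.ofReal_ne_top)]
  refine sum_congr rfl fun f _ => ?_
  rw [integral_smul_measure, integral_dirac, ENNReal.toReal_prod, smul_eq_mul]
  congr 1
  refine prod_congr rfl fun a _ => ?_
  cases f a <;> simp [bernoulliWeight, hp0, sub_nonneg.2 hp1]

theorem sum_prod_mul_prod_columns {β γ : Type*} [Fintype β] [Fintype γ] [DecidableEq β]
    [DecidableEq γ] (q : β × γ → Bool → ℝ) (h : γ → (β → Bool) → ℝ) :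
    ∑ f : β × γ → Bool, (∏ a, q a (f a)) * ∏ c, h c (fun b => f (b, c)) =
      ∏ c, ∑ x : β → Bool, (∏ b, q (b, c) (x b)) * h c x := by
  rw [Fintype.prod_sum, ← (Equiv.curry γ β Bool).symm.trans
    (Equiv.arrowCongr (Equiv.prodComm γ β) (Equiv.refl Bool)) |>.sum_comp]
  refine sum_congr rfl fun M _ => ?_
  simp [Fintype.prod_prod_type_right, prod_mul_distrib]

theorem prod_bernoulliWeight_decide_eq {n : ℕ} (p : ℝ) (i : Fin n) :
    ∏ k, bernoulliWeight p (decide (k = i)) = p * (1 - p) ^ (n - 1) := by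
  have hoff : ∀ k ∈ univ.erase i, bernoulliWeight p (decide (k = i)) = 1 - p := fun k hk => by
    simp [bernoulliWeight, (mem_erase.1 hk).1]
  rw [← mul_prod_erase _ _ (mem_univ i), prod_congr rfl hoff]
  simp [bernoulliWeight]

section BipartiteGraph

variable {N : ℕ}

theorem adjB_symm {f : Fin N × Fin N → Bool} {w u : Fin N ⊕ Fin N} (h : adjB f w u) :
    adjB f u w := by
  cases w <;> cases u <;> exact h

theorem adjB_irrefl {f : Fin N × Fin N → Bool} (w : Fin N ⊕ Fin N) : ¬ adjB f w w := by
  cases w <;> exact id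

theorem adjB_mono {f g : Fin N × Fin N → Bool} (hfg : f ≤ g) {w u : Fin N ⊕ Fin N}
    (h : adjB f w u) : adjB g w u := by
  cases w <;> cases u <;> first | exact h | exact Bool.eq_true_of_true_le (h ▸ hfg _)

theorem isoIndAway_antitone (v w : Fin N ⊕ Fin N) : Antitone (isoIndAway v w (N := N)) := by
  intro f g hfg
  unfold isoIndAway
  split_ifs with hg hf <;> norm_num
  exact hf fun u hu hadj => hg u hu (adjB_mono hfg hadj)

theorem Xv_antitone (v : Fin N ⊕ Fin N) : Antitone (Xv v (N := N)) := fun _ _ hfg =>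
  sum_le_sum fun w _ => by split_ifs <;> first | exact isoIndAway_antitone v w hfg | rfl

theorem Xv_sub_Yv_le_isoCount (v : Fin N ⊕ Fin N) (f : Fin N × Fin N → Bool) :
    Xv v f - Yv v f ≤ isoCount f := by
  rw [Xv, Yv, isoCount, ← sum_sub_distrib]
  refine sum_le_sum fun w _ => ?_
  by_cases hvw : adjB f v w
  · have hwv : w ≠ v := fun h => adjB_irrefl v (h ▸ hvw)
    rw [if_pos hwv, if_pos hvw, sub_self]
    split_ifs <;> norm_num
  · rw [if_neg hvw, sub_zero]
    unfold isoIndAway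
    split_ifs with hwv hiso hiso' <;> norm_num
    -- `w` is not adjacent to `v`, so being isolated away from `v` means being isolated
    exact hiso' fun u hadj => if huv : u = v then hvw (adjB_symm (huv ▸ hadj)) else hiso u huv hadj

def flipRow (i : Fin N) (f : Fin N × Fin N → Bool) : Fin N × Fin N → Bool :=
  fun a => if a.1 = i then !f a else f a

theorem flipRow_involutive (i : Fin N) : Function.Involutive (flipRow i) := fun f => by
  funext a; unfold flipRow; split_ifs <;> simp

theorem sum_comp_flipRow {M : Type*} [AddCommMonoid M] (i : Fin N)
    (H : (Fin N × Fin N → Bool) → M) : ∑ f, H (flipRow i f) = ∑ f, H f :=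
  Equiv.sum_comp (flipRow_involutive i).toPerm H

theorem adjB_flipRow {i : Fin N} {f : Fin N × Fin N → Bool} {w u : Fin N ⊕ Fin N}
    (hw : w ≠ Sum.inl i) (hu : u ≠ Sum.inl i) : adjB (flipRow i f) w u ↔ adjB f w u := by
  cases w <;> cases u <;> simp_all [adjB, flipRow]

theorem Xv_flipRow (i : Fin N) (f : Fin N × Fin N → Bool) :
    Xv (Sum.inl i) (flipRow i f) = Xv (Sum.inl i) f := by
  refine sum_congr rfl fun w _ => ?_
  split_ifs with hw
  · exact if_congr (forall_congr' fun u => imp_congr_right fun hu =>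
      not_congr (adjB_flipRow hw hu)) rfl rfl
  · rfl

theorem isoIndAway_inl_inr (i j : Fin N) (f : Fin N × Fin N → Bool) :
    isoIndAway (Sum.inl i) (Sum.inr j) f = if ∀ k, k ≠ i → f (k, j) = false then 1 else 0 := by
  refine if_congr ⟨fun h k hk => ?_, fun h u hu => ?_⟩ rfl rfl
  · simpa [adjB] using h (Sum.inl k) (by simpa using hk)
  · cases u with
    | inl k => simpa [adjB] using h k (by simpa using hu)
    | inr _ => exact id

theorem Yv_inl (i : Fin N) (f : Fin N × Fin N → Bool) :
    Yv (Sum.inl i) f = ∑ j, if (fun k => f (k, j)) = fun k => decide (k = i) then 1 else 0 := by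
  rw [Yv, Fintype.sum_sum_type,
    sum_eq_zero fun k _ => if_neg (show ¬ adjB f (Sum.inl i) (Sum.inl k) from id), zero_add]
  refine sum_congr rfl fun j _ => ?_
  rw [isoIndAway_inl_inr, ← ite_and]
  refine if_congr (Iff.trans ?_ funext_iff.symm) rfl rfl
  refine ⟨fun ⟨hi, h⟩ k => ?_, fun h => ⟨(by simpa using h i : f (i, j) = true), fun k hk => ?_⟩⟩
  · by_cases hk : k = i
    · exact hk ▸ hi.trans (decide_eq_true rfl).symm
    · simpa [hk] using h k hk
  · simpa [hk] using h k

theorem Yv_inl_flipRow (i : Fin N) (f : Fin N × Fin N → Bool) :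
    Yv (Sum.inl i) (flipRow i f) = ∑ j, if ∀ k, f (k, j) = false then 1 else 0 := by
  rw [Yv_inl]
  refine sum_congr rfl fun j _ => if_congr (funext_iff.trans (forall_congr' fun k => ?_)) rfl rfl
  by_cases hk : k = i <;> simp [flipRow, hk]

theorem antitone_Yv_inl_flipRow (i : Fin N) :
    Antitone fun f => Yv (Sum.inl i) (flipRow i f) := by
  intro f g hfg
  simp only [Yv_inl_flipRow]
  refine sum_le_sum fun j _ => ?_
  split_ifs with hg hf <;> norm_num
  exact hf fun k => Bool.eq_false_of_le_false (hg k ▸ hfg (k, j))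

end BipartiteGraph

theorem exp_mul_indicator (s : ℝ) (P : Prop) [Decidable P] :
    Real.exp (s * if P then 1 else 0) = 1 + (Real.exp s - 1) * if P then 1 else 0 := by
  split_ifs <;> simp

theorem sum_prod_mul_exp_indicator {β : Type*} [Fintype β] [DecidableEq β] {w : Bool → ℝ}
    (hw : ∑ b, w b = 1) (x₀ : β → Bool) (s : ℝ) :
    ∑ x : β → Bool, (∏ b, w (x b)) * Real.exp (s * if x = x₀ then 1 else 0) =
      1 + (Real.exp s - 1) * ∏ b, w (x₀ b) := by
  simp_rw [exp_mul_indicator, mul_add, mul_one, sum_add_distrib, ← Fintype.prod_sum, hw,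
    prod_const_one, mul_left_comm _ (Real.exp s - 1), ← mul_sum, mul_ite, mul_one, mul_zero,
    Fintype.sum_ite_eq']

theorem sum_bernoulliWeight_mul_exp_Yv {N : ℕ} (i : Fin N) (p s : ℝ) :
    ∑ f, (∏ a, bernoulliWeight p (f a)) * Real.exp (s * Yv (Sum.inl i) f) =
      ∏ _w : Fin N, (1 + (Real.exp s - 1) * (1 - p) ^ (N - 1) * p) := by
  simp only [Yv_inl, mul_sum, Real.exp_sum]
  refine (sum_prod_mul_prod_columns (fun _ => bernoulliWeight p)
    (fun (_ : Fin N) (x : Fin N → Bool) =>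
      Real.exp (s * if x = fun k => decide (k = i) then 1 else 0))).trans
    (prod_congr rfl fun j _ => ?_)
  rw [sum_prod_mul_exp_indicator (sum_bernoulliWeight p), prod_bernoulliWeight_decide_eq]
  ring

theorem integral_exp_neg_isoCount_le {N : ℕ} {p : ℝ} (hp0 : 0 ≤ p) (hp1 : p ≤ 1) (i : Fin N)
    {s : ℝ} (hs : 0 ≤ s) :
    ∫ f, Real.exp (-s * isoCount f) ∂productBernoulli (Fin N × Fin N) p ≤
      (∫ f, Real.exp (-s * Xv (Sum.inl i) f) ∂productBernoulli (Fin N × Fin N) p) *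
        ∏ _w : Fin N, (1 + (Real.exp s - 1) * (1 - p) ^ (N - 1) * p) := by
  rw [integral_productBernoulli hp0 hp1, integral_productBernoulli hp0 hp1,
    ← sum_bernoulliWeight_mul_exp_Yv]
  set μ : (Fin N × Fin N → Bool) → ℝ := fun f => ∏ a, bernoulliWeight p (f a)
  set F : (Fin N × Fin N → Bool) → ℝ := fun f => Real.exp (-s * Xv (Sum.inl i) f)
  set E : (Fin N × Fin N → Bool) → ℝ := fun f => Real.exp (s * Yv (Sum.inl i) f)
  have hF : Monotone F := fun f g hfg =>
    Real.exp_le_exp.2 (mul_le_mul_of_nonpos_left (Xv_antitone _ hfg) (neg_nonpos.2 hs))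
  have hE : Antitone fun f => E (flipRow i f) := fun f g hfg =>
    Real.exp_le_exp.2 (mul_le_mul_of_nonneg_left (antitone_Yv_inl_flipRow i hfg) hs)
  calc ∑ f, μ f * Real.exp (-s * isoCount f)
      ≤ ∑ f, μ f * (F f * E f) := by
        refine sum_le_sum fun f _ => mul_le_mul_of_nonneg_left ?_
          (prod_nonneg fun a _ => bernoulliWeight_nonneg hp0 hp1 _)
        rw [← Real.exp_add, Real.exp_le_exp]
        nlinarith [Xv_sub_Yv_le_isoCount (Sum.inl i) f]
    _ = ∑ f, μ (flipRow i f) * (F f * E (flipRow i f)) := by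
        rw [← sum_comp_flipRow i]
        simp only [F, Xv_flipRow]
    _ ≤ (∑ f, μ (flipRow i f) * F f) * ∑ f, μ (flipRow i f) * E (flipRow i f) :=
        -- with these coordinate laws, `∏ a, q a (f a) = μ (flipRow i f)` definitionally
        harris_of_monotone_of_antitone
          (q := fun a b => bernoulliWeight p (flipRow i (fun _ => b) a))
          (fun _ _ => bernoulliWeight_nonneg hp0 hp1 _)
          (fun a => by unfold flipRow; split_ifs <;> simp [bernoulliWeight])
          (fun f => (Real.exp_pos _).le) hF hE
    _ = (∑ f, μ f * F f) * ∑ f, μ f * E f := by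
        rw [← sum_comp_flipRow i (fun f => μ f * F f),
          ← sum_comp_flipRow i (fun f => μ f * E f)]
        simp only [F, Xv_flipRow]

theorem denominator_bound (N : ℕ) (p : ℝ) (hp0 : 0 ≤ p) (hp1 : p ≤ 1)
    (i : Fin N) (s : ℝ) (hs : 0 ≤ s) :
    (∫ f, Real.exp (-s * isoCount f) ∂(productBernoulli (Fin N × Fin N) p)) ≤
      (∫ f, Real.exp (-s * Xv (Sum.inl i) f) ∂(productBernoulli (Fin N × Fin N) p)) *
        ∏ _w : Fin N, (1 + (Real.exp s - 1) * (1 - p)^(N - 1) * p) ∧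
    (∫ f, Real.exp (-s * isoCount f) ∂(productBernoulli (Fin N × Fin N) p)) ≤
      (∫ f, Real.exp (-s * Xv (Sum.inl i) f) ∂(productBernoulli (Fin N × Fin N) p)) *
        Real.exp ((Real.exp s - 1) * N * (1 - p)^(N - 1) * p) := by
  have hbound := integral_exp_neg_isoCount_le hp0 hp1 i hs
  refine ⟨hbound, hbound.trans (mul_le_mul_of_nonneg_left ?_
    (integral_nonneg fun f => (Real.exp_pos _).le))⟩
  have hx : 0 ≤ (Real.exp s - 1) * (1 - p) ^ (N - 1) * p :=
    mul_nonneg (mul_nonneg (sub_nonneg.2 (Real.one_le_exp hs))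
      (pow_nonneg (sub_nonneg.2 hp1) _)) hp0
  calc ∏ _w : Fin N, (1 + (Real.exp s - 1) * (1 - p) ^ (N - 1) * p)
      = (1 + (Real.exp s - 1) * (1 - p) ^ (N - 1) * p) ^ N := by simp
    _ ≤ Real.exp ((Real.exp s - 1) * (1 - p) ^ (N - 1) * p) ^ N := by
        gcongr
        linarith [Real.add_one_le_exp ((Real.exp s - 1) * (1 - p) ^ (N - 1) * p)]
    _ = Real.exp ((Real.exp s - 1) * N * (1 - p) ^ (N - 1) * p) := by
        rw [← Real.exp_nat_mul]
        ring_nf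
end
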